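/- arXiv:2109.12374 — 3 statements merged into one kernel-verified Lean document; each statement's English description precedes it below -/
import Mathlib

section
/- Assume p_0 = 0 and p_1 > 0. Let f(s) = ∑_{j≥1} p_j s^j and f_n(s) = E[s^{Z_n}] for 0 ≤ s < 1. Then for every s ∈ [0,1) the limit Q(s) := lim_{n→∞} f_n(s)/p_1^n exists and is finite, and the function Q so defined satisfies Q(0) = 0, Q(s) < ∞ for 0 ≤ s < 1, and the functional equation Q(f(s)) = p_1 Q(s) for all 0 ≤ s < 1. (Lemma 6.1, due to Athreya.) -/
/-!
Conditioning on `Z n` and using the independence of the offspring variables gives the branching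
identity `E[s^{Z (n+1)}] = E[f(s)^{Z n}]`, so `f_n = f^[n]`. Since `p₀ = 0`, the generating
function satisfies `p₁ s ≤ f s ≤ p₁ s + (1 - p₁) s²` on `[0, 1]`. The lower bound makes
`f^[n] s / p₁^n` nondecreasing. The upper bound gives the geometric decay
`f^[n] s ≤ s (p₁ + (1 - p₁) s)^n`, and then
`f^[n] s / p₁^n ≤ s ∏_{k<n} (1 + (1 - p₁)/p₁ · f^[k] s)` is bounded, so the ratio converges.
Shifting the index in the limit gives `Q (f s) = p₁ Q s`.
-/

open MeasureTheory ProbabilityTheory Filter Set Finset Function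

/-- The bounds on `[0, 1]` satisfied by the generating function of an offspring law with
`p₀ = 0` and `p₁ = p`. -/
structure PGFBounds (F : ℝ → ℝ) (p : ℝ) : Prop where
  pos : 0 < p
  lower : ∀ t ∈ Icc (0 : ℝ) 1, p * t ≤ F t
  upper : ∀ t ∈ Icc (0 : ℝ) 1, F t ≤ p * t + (1 - p) * t ^ 2

/-- Koenigs' solution of Schröder's equation `Q ∘ F = p • Q` at the attracting fixed point `0`. -/
noncomputable def koenigsFunction (F : ℝ → ℝ) (p s : ℝ) : ℝ :=
  ⨆ n : ℕ, F^[n] s / p ^ n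

namespace PGFBounds

open Real

variable {F : ℝ → ℝ} {p s : ℝ}

theorem le_one (h : PGFBounds F p) : p ≤ 1 := by
  have hlo := h.lower 1 (right_mem_Icc.2 zero_le_one)
  have hup := h.upper 1 (right_mem_Icc.2 zero_le_one)
  linarith

theorem mem_Icc (h : PGFBounds F p) {t : ℝ} (ht : t ∈ Icc (0 : ℝ) 1) : F t ∈ Icc 0 t := by
  have hp := h.le_one
  refine ⟨(mul_nonneg h.pos.le ht.1).trans (h.lower t ht), (h.upper t ht).trans ?_⟩
  nlinarith [mul_nonneg (mul_nonneg (sub_nonneg.2 hp) ht.1) (sub_nonneg.2 ht.2)]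

theorem iterate_mem_Icc (h : PGFBounds F p) (hs : s ∈ Icc (0 : ℝ) 1) :
    ∀ n, F^[n] s ∈ Icc 0 s
  | 0 => ⟨hs.1, le_rfl⟩
  | n + 1 => by
    have ih := h.iterate_mem_Icc hs n
    have hF := h.mem_Icc ⟨ih.1, ih.2.trans hs.2⟩
    rw [iterate_succ_apply']
    exact ⟨hF.1, hF.2.trans ih.2⟩

theorem iterate_le_geometric (h : PGFBounds F p) (hs : s ∈ Icc (0 : ℝ) 1) (n : ℕ) :
    F^[n] s ≤ s * (p + (1 - p) * s) ^ n := by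
  induction n with
  | zero => simp
  | succ n ih =>
    obtain ⟨ht0, hts⟩ := h.iterate_mem_Icc hs n
    have hc : 0 ≤ p + (1 - p) * s := by nlinarith [h.pos, h.le_one, hs.1]
    calc F^[n + 1] s = F (F^[n] s) := iterate_succ_apply' F n s
      _ ≤ p * F^[n] s + (1 - p) * (F^[n] s) ^ 2 := h.upper _ ⟨ht0, hts.trans hs.2⟩
      _ ≤ (p + (1 - p) * s) * F^[n] s := by
        nlinarith [mul_nonneg (mul_nonneg (sub_nonneg.2 h.le_one) ht0) (sub_nonneg.2 hts)]
      _ ≤ (p + (1 - p) * s) * (s * (p + (1 - p) * s) ^ n) := mul_le_mul_of_nonneg_left ih hc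
      _ = s * (p + (1 - p) * s) ^ (n + 1) := by ring

theorem monotone_iterate_div_pow (h : PGFBounds F p) (hs : s ∈ Icc (0 : ℝ) 1) :
    Monotone fun n => F^[n] s / p ^ n := by
  refine monotone_nat_of_le_succ fun n => ?_
  obtain ⟨ht0, hts⟩ := h.iterate_mem_Icc hs n
  have hp := h.pos
  calc F^[n] s / p ^ n = p * F^[n] s / p ^ (n + 1) := by field_simp; ring
    _ ≤ F (F^[n] s) / p ^ (n + 1) := by gcongr; exact h.lower _ ⟨ht0, hts.trans hs.2⟩
    _ = F^[n + 1] s / p ^ (n + 1) := by rw [iterate_succ_apply']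

theorem iterate_succ_div_pow_le (h : PGFBounds F p) (hs : s ∈ Icc (0 : ℝ) 1) (n : ℕ) :
    F^[n + 1] s / p ^ (n + 1) ≤
      F^[n] s / p ^ n * exp ((1 - p) / p * (s * (p + (1 - p) * s) ^ n)) := by
  obtain ⟨ht0, hts⟩ := h.iterate_mem_Icc hs n
  have hp := h.pos
  set t := F^[n] s
  have hexp : 1 + (1 - p) / p * t ≤ exp ((1 - p) / p * (s * (p + (1 - p) * s) ^ n)) := by
    calc 1 + (1 - p) / p * t ≤ exp ((1 - p) / p * t) := by
          rw [add_comm]; exact add_one_le_exp _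
      _ ≤ _ := exp_le_exp.2 <| mul_le_mul_of_nonneg_left (h.iterate_le_geometric hs n)
          (div_nonneg (sub_nonneg.2 h.le_one) hp.le)
  calc F^[n + 1] s / p ^ (n + 1) = F t / p ^ (n + 1) := by rw [iterate_succ_apply']
    _ ≤ (p * t + (1 - p) * t ^ 2) / p ^ (n + 1) := by
      gcongr; exact h.upper t ⟨ht0, hts.trans hs.2⟩
    _ = t / p ^ n * (1 + (1 - p) / p * t) := by field_simp; ring
    _ ≤ _ := by gcongr

theorem iterate_div_pow_le (h : PGFBounds F p) (hs : s ∈ Ico (0 : ℝ) 1) (n : ℕ) :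
    F^[n] s / p ^ n ≤ s * exp (s / (p * (1 - s))) := by
  have hs' : s ∈ Icc (0 : ℝ) 1 := Ico_subset_Icc_self hs
  have hp := h.pos
  set c := p + (1 - p) * s
  have hprod : ∀ m, F^[m] s / p ^ m ≤ s * exp ((1 - p) / p * (s * ∑ k ∈ range m, c ^ k)) := by
    intro m
    induction m with
    | zero => simp
    | succ m ih =>
      calc F^[m + 1] s / p ^ (m + 1) ≤ F^[m] s / p ^ m * exp ((1 - p) / p * (s * c ^ m)) :=
            h.iterate_succ_div_pow_le hs' m
        _ ≤ s * exp ((1 - p) / p * (s * ∑ k ∈ range m, c ^ k)) *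
              exp ((1 - p) / p * (s * c ^ m)) := by gcongr
        _ = s * exp ((1 - p) / p * (s * ∑ k ∈ range (m + 1), c ^ k)) := by
          rw [mul_assoc, ← exp_add, sum_range_succ]; ring_nf
  -- `(1 - c) ∑_{k<n} c^k = 1 - c^n` with `1 - c = (1 - p)(1 - s)`
  have hgeom : (1 - p) * ∑ k ∈ range n, c ^ k ≤ 1 / (1 - s) := by
    have hc : 0 ≤ c := by nlinarith [h.le_one, hs.1]
    have := mul_neg_geom_sum c n
    rw [le_div_iff₀ (sub_pos.2 hs.2)]
    nlinarith [pow_nonneg hc n]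
  refine (hprod n).trans (mul_le_mul_of_nonneg_left (exp_le_exp.2 ?_) hs.1)
  calc (1 - p) / p * (s * ∑ k ∈ range n, c ^ k) = s / p * ((1 - p) * ∑ k ∈ range n, c ^ k) := by
        ring
    _ ≤ s / p * (1 / (1 - s)) := by gcongr; exact div_nonneg hs.1 hp.le
    _ = s / (p * (1 - s)) := by field_simp

theorem tendsto_iterate_div_pow (h : PGFBounds F p) (hs : s ∈ Ico (0 : ℝ) 1) :
    Tendsto (fun n => F^[n] s / p ^ n) atTop (nhds (koenigsFunction F p s)) :=
  tendsto_atTop_ciSup (h.monotone_iterate_div_pow (Ico_subset_Icc_self hs))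
    ⟨_, forall_mem_range.2 (h.iterate_div_pow_le hs)⟩

theorem koenigsFunction_zero (h : PGFBounds F p) : koenigsFunction F p 0 = 0 := by
  have hzero (n : ℕ) : F^[n] 0 = 0 :=
    le_antisymm (h.iterate_mem_Icc (left_mem_Icc.2 zero_le_one) n).2
      (h.iterate_mem_Icc (left_mem_Icc.2 zero_le_one) n).1
  simp [koenigsFunction, hzero]

theorem koenigsFunction_apply_eq_mul (h : PGFBounds F p) (hs : s ∈ Ico (0 : ℝ) 1) :
    koenigsFunction F p (F s) = p * koenigsFunction F p s := by
  have hFs : F s ∈ Ico (0 : ℝ) 1 :=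
    let hF := h.mem_Icc (Ico_subset_Icc_self hs)
    ⟨hF.1, hF.2.trans_lt hs.2⟩
  refine tendsto_nhds_unique (h.tendsto_iterate_div_pow hFs) ?_
  refine (((h.tendsto_iterate_div_pow hs).comp (tendsto_add_atTop_nat 1)).const_mul p).congr
    fun n => ?_
  have hp := h.pos.ne'
  simp only [comp_apply, iterate_succ_apply, pow_succ]
  field_simp

end PGFBounds

theorem pgfBounds_tsum {p : ℕ → ℝ} (hnn : ∀ k, 0 ≤ p k) (hsum : HasSum p 1) (hp0 : p 0 = 0)
    (hp1 : 0 < p 1) : PGFBounds (fun s => ∑' j, p j * s ^ j) (p 1) := by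
  have hterms {t : ℝ} (ht : t ∈ Icc (0 : ℝ) 1) :
      HasSum (fun j => p j * t ^ j) (∑' j, p j * t ^ j) :=
    (Summable.of_nonneg_of_le (fun j => mul_nonneg (hnn j) (pow_nonneg ht.1 j))
      (fun j => mul_le_of_le_one_right (hnn j) (pow_le_one₀ ht.1 ht.2)) hsum.summable).hasSum
  refine ⟨hp1, fun t ht => ?_, fun t ht => ?_⟩
  · simpa using le_hasSum (hterms ht) 1 fun j _ => mul_nonneg (hnn j) (pow_nonneg ht.1 j)
  · -- compare termwise with `p j t² + [j = 1] p₁ (t - t²)`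
    have hdom := (hsum.mul_right (t ^ 2)).add (hasSum_ite_eq 1 (p 1 * (t - t ^ 2)))
    refine (hasSum_le (fun j => ?_) (hterms ht) hdom).trans_eq (by ring)
    rcases j with _ | _ | j
    · simp [hp0]
    · simp only [zero_add, pow_one, if_true]; linarith
    · simp only [Nat.add_eq_right, add_zero, reduceCtorEq, if_false]
      exact mul_le_mul_of_nonneg_left (pow_le_pow_of_le_one ht.1 ht.2 (by omega)) (hnn _)

theorem measurable_sum_range_apply :
    Measurable fun q : ℕ × (ℕ → ℕ) => ∑ i ∈ range q.1, q.2 i :=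
  measurable_from_prod_countable_right fun k =>
    Finset.measurable_sum (range k) fun i _ => measurable_pi_apply i

section Probability

variable {Ω : Type*} [MeasurableSpace Ω] {P : Measure Ω}

theorem measurable_of_eq_sum_range {X : ℕ → ℕ → Ω → ℕ} {Z : ℕ → Ω → ℕ} (h0 : Measurable (Z 0))
    (hrec : ∀ n ω, Z (n + 1) ω = ∑ i ∈ range (Z n ω), X n i ω) (hX : ∀ n i, Measurable (X n i)) :
    ∀ n, Measurable (Z n)
  | 0 => h0
  | n + 1 => by
    rw [show Z (n + 1) = (fun q : ℕ × (ℕ → ℕ) => ∑ i ∈ range q.1, q.2 i) ∘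
        fun ω => (Z n ω, fun i => X n i ω) from funext (hrec n)]
    exact measurable_sum_range_apply.comp
      ((measurable_of_eq_sum_range h0 hrec hX n).prodMk (measurable_pi_lambda _ (hX n)))

theorem integrable_pow_of_mem_Icc [IsFiniteMeasure P] {W : Ω → ℕ} (hW : Measurable W) {t : ℝ}
    (ht : t ∈ Icc (0 : ℝ) 1) : Integrable (fun ω => t ^ W ω) P :=
  .of_bound (measurable_from_top.comp hW).aestronglyMeasurable 1 <| ae_of_all _ fun ω => by
    rw [Real.norm_of_nonneg (pow_nonneg ht.1 _)]
    exact pow_le_one₀ ht.1 ht.2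

theorem integral_pow_eq_tsum [IsFiniteMeasure P] {W : Ω → ℕ} (hW : Measurable W) {t : ℝ}
    (ht : t ∈ Icc (0 : ℝ) 1) : ∫ ω, t ^ W ω ∂P = ∑' k, (P {ω | W ω = k}).toReal * t ^ k := by
  rw [← integral_map hW.aemeasurable measurable_from_top.aestronglyMeasurable,
    integral_countable (integrable_pow_of_mem_Icc (W := fun k => k) measurable_id ht)]
  congr with k
  rw [measureReal_def, Measure.map_apply hW (measurableSet_singleton k), smul_eq_mul]
  rfl

theorem integral_pow_sum_range_eq_pow {Y : ℕ → Ω → ℕ} {W : Ω → ℕ} (hY : iIndepFun Y P)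
    (hYm : ∀ i, Measurable (Y i)) (hYW : ∀ i, IdentDistrib (Y i) W P P) (s : ℝ) (k : ℕ) :
    ∫ ω, s ^ (∑ i ∈ range k, Y i ω) ∂P = (∫ ω, s ^ W ω ∂P) ^ k := by
  have hk : iIndepFun (fun (i : Fin k) ω => s ^ Y i ω) P :=
    (hY.precomp Fin.val_injective).comp (fun _ x => s ^ x) fun _ => measurable_from_top
  calc ∫ ω, s ^ (∑ i ∈ range k, Y i ω) ∂P = ∫ ω, ∏ i : Fin k, s ^ Y i ω ∂P := by
        congr with ω
        rw [prod_pow_eq_pow_sum, Fin.sum_univ_eq_sum_range (fun i => Y i ω)]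
    _ = ∏ i : Fin k, ∫ ω, s ^ Y i ω ∂P := hk.integral_fun_prod_eq_prod_integral fun i =>
        (measurable_from_top.comp (hYm i)).aestronglyMeasurable
    _ = (∫ ω, s ^ W ω ∂P) ^ k := by
        have hid (i : ℕ) : ∫ ω, s ^ Y i ω ∂P = ∫ ω, s ^ W ω ∂P :=
          ((hYW i).comp (measurable_from_top (f := fun x : ℕ => s ^ x))).integral_eq
        simp only [hid, prod_const, card_univ, Fintype.card_fin]

theorem ProbabilityTheory.IndepFun.integral_comp_eq_integral_integral [IsFiniteMeasure P]
    {α β : Type*} [MeasurableSpace α] [MeasurableSpace β] {Y : Ω → α} {W : Ω → β}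
    (hYW : IndepFun Y W P) (hY : Measurable Y) (hW : Measurable W) {g : α × β → ℝ}
    (hg : Measurable g) {C : ℝ} (hgC : ∀ x, ‖g x‖ ≤ C) :
    ∫ ω, g (Y ω, W ω) ∂P = ∫ ω, ∫ ω', g (Y ω, W ω') ∂P ∂P := by
  have hint : Integrable g ((P.map Y).prod (P.map W)) :=
    Integrable.of_bound hg.aestronglyMeasurable C (ae_of_all _ hgC)
  rw [← integral_map (hY.prodMk hW).aemeasurable hg.aestronglyMeasurable,
    (indepFun_iff_map_prod_eq_prod_map_map hY.aemeasurable hW.aemeasurable).1 hYW,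
    integral_prod g hint,
    integral_map hY.aemeasurable hint.integral_prod_left.aestronglyMeasurable]
  congr with ω
  exact integral_map hW.aemeasurable (hg.comp measurable_prodMk_left).aestronglyMeasurable

variable [IsProbabilityMeasure P] {X : ℕ → ℕ → Ω → ℕ} {Z : ℕ → Ω → ℕ}

theorem integral_pow_mem_Icc {W : Ω → ℕ} (hW : Measurable W) {t : ℝ}
    (ht : t ∈ Icc (0 : ℝ) 1) : ∫ ω, t ^ W ω ∂P ∈ Icc (0 : ℝ) 1 :=
  ⟨integral_nonneg fun _ => pow_nonneg ht.1 _, by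
    simpa using integral_mono (integrable_pow_of_mem_Icc hW ht) (integrable_const (μ := P) 1)
      fun _ => pow_le_one₀ ht.1 ht.2⟩

theorem integral_pow_succ_eq_integral_pow_integral
    (hZrec : ∀ n ω, Z (n + 1) ω = ∑ i ∈ range (Z n ω), X n i ω)
    (hXmeas : ∀ n i, Measurable (X n i)) (hindep : iIndepFun (fun p : ℕ × ℕ => X p.1 p.2) P)
    (hident : ∀ n i, IdentDistrib (X n i) (X 0 0) P P)
    (hZX : ∀ n, IndepFun (Z n) (fun ω i => X n i ω) P) {n : ℕ} (hZmeas : Measurable (Z n))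
    {s : ℝ} (hs : s ∈ Icc (0 : ℝ) 1) :
    ∫ ω, s ^ Z (n + 1) ω ∂P = ∫ ω, (∫ ω', s ^ X 0 0 ω' ∂P) ^ Z n ω ∂P := by
  have hg : Measurable fun q : ℕ × (ℕ → ℕ) => s ^ ∑ i ∈ range q.1, q.2 i :=
    measurable_from_top.comp measurable_sum_range_apply
  have hbound (q : ℕ × (ℕ → ℕ)) : ‖s ^ ∑ i ∈ range q.1, q.2 i‖ ≤ 1 := by
    rw [Real.norm_of_nonneg (pow_nonneg hs.1 _)]
    exact pow_le_one₀ hs.1 hs.2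
  have hXn : iIndepFun (X n) P :=
    hindep.precomp (g := fun i => (n, i)) fun _ _ h => (Prod.mk.inj h).2
  calc ∫ ω, s ^ Z (n + 1) ω ∂P = ∫ ω, s ^ ∑ i ∈ range (Z n ω), X n i ω ∂P := by
        simp only [hZrec]
    _ = ∫ ω, ∫ ω', s ^ ∑ i ∈ range (Z n ω), X n i ω' ∂P ∂P :=
        (hZX n).integral_comp_eq_integral_integral hZmeas (measurable_pi_lambda _ (hXmeas n)) hg
          hbound
    _ = ∫ ω, (∫ ω', s ^ X 0 0 ω' ∂P) ^ Z n ω ∂P := by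
        congr with ω
        exact integral_pow_sum_range_eq_pow hXn (hXmeas n) (hident n) s _

theorem integral_pow_eq_iterate (hZ0 : ∀ ω, Z 0 ω = 1)
    (hZrec : ∀ n ω, Z (n + 1) ω = ∑ i ∈ range (Z n ω), X n i ω)
    (hXmeas : ∀ n i, Measurable (X n i)) (hindep : iIndepFun (fun p : ℕ × ℕ => X p.1 p.2) P)
    (hident : ∀ n i, IdentDistrib (X n i) (X 0 0) P P)
    (hZX : ∀ n, IndepFun (Z n) (fun ω i => X n i ω) P) {F : ℝ → ℝ}
    (hF : ∀ t ∈ Icc (0 : ℝ) 1, ∫ ω, t ^ X 0 0 ω ∂P = F t) (n : ℕ) :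
    ∀ s ∈ Icc (0 : ℝ) 1, ∫ ω, s ^ Z n ω ∂P = F^[n] s := by
  have hZmeas : ∀ n, Measurable (Z n) :=
    measurable_of_eq_sum_range (by simp only [funext hZ0, measurable_const]) hZrec hXmeas
  induction n with
  | zero => simp [hZ0]
  | succ n ih =>
    intro s hs
    rw [integral_pow_succ_eq_integral_pow_integral hZrec hXmeas hindep hident hZX (hZmeas n) hs,
      ih _ (integral_pow_mem_Icc (hXmeas 0 0) hs), hF s hs, iterate_succ_apply]

end Probability

theorem athreya_generating_function_limit_general
    {Ω : Type*} [MeasurableSpace Ω] (P : Measure Ω) [IsProbabilityMeasure P]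
    (X : ℕ → ℕ → Ω → ℕ) (Z : ℕ → Ω → ℕ)
    (hZ0 : ∀ ω, Z 0 ω = 1)
    (hZrec : ∀ n ω, Z (n + 1) ω = ∑ i ∈ Finset.range (Z n ω), X n i ω)
    (hXmeas : ∀ n i, Measurable (X n i))
    (hindep : iIndepFun (fun p : ℕ × ℕ => X p.1 p.2) P)
    (hident : ∀ n i, IdentDistrib (X n i) (X 0 0) P P)
    (hZX : ∀ n, IndepFun (Z n) (fun ω i => X n i ω) P)
    (p : ℕ → ℝ) (hp : ∀ k, p k = (P {ω | X 0 0 ω = k}).toReal)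
    (hp0 : p 0 = 0) (hp1 : 0 < p 1) :
    ∃ Q : ℝ → ℝ,
      (∀ s ∈ Set.Ico (0 : ℝ) 1,
        Tendsto (fun n => (∫ ω, s ^ Z n ω ∂P) / (p 1) ^ n) atTop (nhds (Q s))) ∧
      Q 0 = 0 ∧
      (∀ s ∈ Set.Ico (0 : ℝ) 1, Q (∑' j : ℕ, p j * s ^ j) = p 1 * Q s) := by
  have hpgf (t : ℝ) (ht : t ∈ Icc (0 : ℝ) 1) : ∫ ω, t ^ X 0 0 ω ∂P = ∑' j, p j * t ^ j := by
    simp only [hp, integral_pow_eq_tsum (hXmeas 0 0) ht]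
  have hsum : HasSum p 1 := by
    have htsum : ∑' j, p j = 1 := by simpa using (hpgf 1 (right_mem_Icc.2 zero_le_one)).symm
    have hsummable : Summable p := by
      by_contra h
      simp [tsum_eq_zero_of_not_summable h] at htsum
    exact htsum ▸ hsummable.hasSum
  have hF := pgfBounds_tsum (fun k => hp k ▸ ENNReal.toReal_nonneg) hsum hp0 hp1
  have hZ := integral_pow_eq_iterate hZ0 hZrec hXmeas hindep hident hZX hpgf
  refine ⟨koenigsFunction (fun s => ∑' j, p j * s ^ j) (p 1), fun s hs => ?_,
    hF.koenigsFunction_zero, fun s hs => hF.koenigsFunction_apply_eq_mul hs⟩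
  simpa only [hZ _ s (Ico_subset_Icc_self hs)] using hF.tendsto_iterate_div_pow hs

/-- Lemma 6.1 (Athreya): convergence of `f_n(s)/p_1^n` to a function `Q` with `Q(0)=0`
and the functional equation `Q(f(s)) = p_1 Q(s)`. -/
theorem athreya_generating_function_limit
    {Ω : Type*} [MeasurableSpace Ω] (P : Measure Ω) [IsProbabilityMeasure P]
    (X : ℕ → ℕ → Ω → ℕ) (Z : ℕ → Ω → ℕ)
    (hZ0 : ∀ ω, Z 0 ω = 1)
    (hZrec : ∀ n ω, Z (n + 1) ω = ∑ i ∈ Finset.range (Z n ω), X n i ω)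
    (hXmeas : ∀ n i, Measurable (X n i))
    (hindep : iIndepFun (fun p : ℕ × ℕ => X p.1 p.2) P)
    (hident : ∀ n i, IdentDistrib (X n i) (X 0 0) P P)
    (hZX : ∀ n, IndepFun (Z n) (fun ω i => X n i ω) P)
    (m : ℝ) (hm : m = ∫ ω, (Z 1 ω : ℝ) ∂P) (hm1 : 1 < m)
    (hmInt : Integrable (fun ω => (Z 1 ω : ℝ)) P)
    (p : ℕ → ℝ) (hp : ∀ k, p k = (P {ω | X 0 0 ω = k}).toReal)
    (hp0 : p 0 = 0) (hp1 : 0 < p 1) :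
    ∃ Q : ℝ → ℝ,
      (∀ s ∈ Set.Ico (0 : ℝ) 1,
        Tendsto (fun n => (∫ ω, s ^ Z n ω ∂P) / (p 1) ^ n) atTop (nhds (Q s))) ∧
      Q 0 = 0 ∧
      (∀ s ∈ Set.Ico (0 : ℝ) 1, Q (∑' j : ℕ, p j * s ^ j) = p 1 * Q s) :=
  athreya_generating_function_limit_general P X Z hZ0 hZrec hXmeas hindep hident hZX p hp hp0 hp1
end

section
/- If Z_1 ≤ m + c₂ almost surely for some constant c₂ > 0, then Condition (B) is satisfied with c = (2^{3/2}/3) max{m, c₂}; that is, E|Z_1 − m|^l ≤ (1/2) l! (l−1)^{−l/2} ((2^{3/2}/3) max{m, c₂})^{l−2} Var(Z_1) for every integer l ≥ 2. (Remark 2.1, item 1.) -/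
open MeasureTheory ProbabilityTheory
open scoped Nat

/-!
Since `Z₁ ≥ 0` and `Z₁ ≤ m + c₂`, the deviation `|Z₁ - m|` is bounded by `M = max m c₂`, whence
`E|Z₁ - m|^l ≤ M^(l-2) Var Z₁`. It remains to see that the constant
`(1/2) l! (l-1)^(-l/2) (2^(3/2)/3)^(l-2)` is at least `1`, i.e. `4 (l-1)^l ≤ (l!)^2 (8/9)^(l-2)`.
This follows by induction on `l` from `(1 + 1/k)^(k+1) ≤ 4`, itself a consequence of
`(1 + 1/k)^k ≤ e < 3` for `k ≥ 3`.
-/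

lemma one_add_inv_pow_succ_le_four {k : ℕ} (hk : 1 ≤ k) : (1 + (k : ℝ)⁻¹) ^ (k + 1) ≤ 4 := by
  rcases Nat.lt_or_ge k 3 with hk3 | hk3
  · interval_cases k <;> norm_num
  have hinv : (k : ℝ)⁻¹ ≤ 1 / 3 := by
    rw [inv_le_comm₀ (by positivity) (by norm_num)]; norm_num; exact_mod_cast hk3
  calc (1 + (k : ℝ)⁻¹) ^ (k + 1) = (1 + (k : ℝ)⁻¹) ^ k * (1 + (k : ℝ)⁻¹) := pow_succ _ _
    _ ≤ 3 * (1 + 1 / 3) := by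
      gcongr
      exact Real.one_add_inv_pow_le_exp.trans Real.exp_one_lt_three.le
    _ = 4 := by norm_num

lemma pow_le_four_mul_sub_one_pow {n : ℕ} (hn : 2 ≤ n) : (n : ℝ) ^ n ≤ 4 * ((n : ℝ) - 1) ^ n := by
  obtain ⟨k, rfl⟩ : ∃ k, n = k + 1 := ⟨n - 1, by omega⟩
  have hk : (0 : ℝ) < k := by norm_cast; omega
  have hsplit : ((k + 1 : ℕ) : ℝ) ^ (k + 1) = (1 + (k : ℝ)⁻¹) ^ (k + 1) * (k : ℝ) ^ (k + 1) := by
    rw [← mul_pow]; field_simp; push_cast; ring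
  rw [hsplit]
  push_cast
  rw [add_sub_cancel_right]
  gcongr
  exact one_add_inv_pow_succ_le_four (by omega)

lemma four_mul_sub_one_pow_le_factorial_sq {l : ℕ} (hl : 2 ≤ l) :
    4 * ((l : ℝ) - 1) ^ l ≤ (l ! : ℝ) ^ 2 * (8 / 9) ^ (l - 2) := by
  induction l, hl using Nat.le_induction with
  | base => norm_num [Nat.factorial]
  | succ l hl ih =>
    have hl2 : (2 : ℝ) ≤ l := by exact_mod_cast hl
    -- consecutive ratio: `(8/9) (l+1)^2 / l * (1 - 1/l)^l ≥ (8/9) (l+1)^2 / (4 l) ≥ 1`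
    have hstep : 9 * (l : ℝ) ^ (l + 1) ≤ 8 * ((l : ℝ) + 1) ^ 2 * ((l : ℝ) - 1) ^ l := by
      calc 9 * (l : ℝ) ^ (l + 1) = 9 * l * (l : ℝ) ^ l := by ring
        _ ≤ 9 * l * (4 * ((l : ℝ) - 1) ^ l) := by gcongr; exact pow_le_four_mul_sub_one_pow hl
        _ = 36 * l * ((l : ℝ) - 1) ^ l := by ring
        _ ≤ 8 * ((l : ℝ) + 1) ^ 2 * ((l : ℝ) - 1) ^ l := by
          exact mul_le_mul_of_nonneg_right (by nlinarith) (pow_nonneg (by linarith) _)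
    calc 4 * (((l + 1 : ℕ) : ℝ) - 1) ^ (l + 1) = 4 * (l : ℝ) ^ (l + 1) := by push_cast; ring
      _ ≤ 8 / 9 * ((l : ℝ) + 1) ^ 2 * (4 * ((l : ℝ) - 1) ^ l) := by linarith
      _ ≤ 8 / 9 * ((l : ℝ) + 1) ^ 2 * ((l ! : ℝ) ^ 2 * (8 / 9) ^ (l - 2)) := by gcongr
      _ = ((l + 1)! : ℝ) ^ 2 * (8 / 9) ^ (l + 1 - 2) := by
        rw [Nat.factorial_succ, show l + 1 - 2 = l - 2 + 1 by omega, pow_succ]; push_cast; ring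

lemma one_le_half_mul_factorial_mul_rpow_mul_pow {l : ℕ} (hl : 2 ≤ l) :
    1 ≤ 1 / 2 * (l ! : ℝ) * ((l : ℝ) - 1) ^ (-(l : ℝ) / 2) *
      ((2 : ℝ) ^ ((3 : ℝ) / 2) / 3) ^ (l - 2) := by
  have hl1 : (1 : ℝ) ≤ l - 1 := by
    have : (2 : ℝ) ≤ l := by exact_mod_cast hl
    linarith
  set a := ((l : ℝ) - 1) ^ ((l : ℝ) / 2) with ha
  set b := (2 : ℝ) ^ ((3 : ℝ) / 2) / 3 with hb
  have ha0 : 0 < a := by positivity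
  have ha2 : a ^ 2 = ((l : ℝ) - 1) ^ l := by
    rw [ha, ← Real.rpow_natCast, ← Real.rpow_mul (by linarith)]
    norm_num
  have hb2 : b ^ 2 = 8 / 9 := by
    rw [hb, div_pow, ← Real.rpow_natCast, ← Real.rpow_mul (by norm_num)]
    norm_num
  have hkey : 2 * a ≤ l ! * b ^ (l - 2) := by
    rw [← pow_le_pow_iff_left₀ (by positivity) (by positivity) two_ne_zero, mul_pow, mul_pow,
      ← pow_mul, mul_comm (l - 2), pow_mul, ha2, hb2]
    norm_num
    exact four_mul_sub_one_pow_le_factorial_sq hl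
  rw [neg_div, Real.rpow_neg (by linarith), ← ha]
  calc (1 : ℝ) = 2 * a / (2 * a) := (div_self (by positivity)).symm
    _ ≤ l ! * b ^ (l - 2) / (2 * a) := by gcongr
    _ = 1 / 2 * (l ! : ℝ) * a⁻¹ * b ^ (l - 2) := by field_simp

lemma integral_abs_pow_le_pow_mul_integral_sq {Ω : Type*} [MeasurableSpace Ω] {μ : Measure Ω}
    [IsFiniteMeasure μ] {Y : Ω → ℝ} (hY : AEStronglyMeasurable Y μ) {M : ℝ}
    (hYM : ∀ᵐ ω ∂μ, |Y ω| ≤ M) {l : ℕ} (hl : 2 ≤ l) :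
    ∫ ω, |Y ω| ^ l ∂μ ≤ M ^ (l - 2) * ∫ ω, Y ω ^ 2 ∂μ := by
  have hint : ∀ k : ℕ, Integrable (fun ω => |Y ω| ^ k) μ := fun k =>
    .of_bound (hY.norm.pow k) (M ^ k) (by
      filter_upwards [hYM] with ω h
      rw [Real.norm_eq_abs, abs_pow, abs_abs]
      exact pow_le_pow_left₀ (abs_nonneg _) h k)
  calc ∫ ω, |Y ω| ^ l ∂μ ≤ ∫ ω, M ^ (l - 2) * |Y ω| ^ 2 ∂μ := by
        refine integral_mono_ae (hint l) ((hint 2).const_mul _) ?_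
        filter_upwards [hYM] with ω h
        rw [← Nat.sub_add_cancel hl, pow_add, Nat.add_sub_cancel]
        exact mul_le_mul_of_nonneg_right (pow_le_pow_left₀ (abs_nonneg _) h _) (by positivity)
    _ = M ^ (l - 2) * ∫ ω, Y ω ^ 2 ∂μ := by simp only [sq_abs, integral_const_mul]

lemma integral_abs_sub_integral_pow_le_pow_mul_variance {Ω : Type*} [MeasurableSpace Ω]
    {μ : Measure Ω} [IsFiniteMeasure μ] {X : Ω → ℝ} (hX : AEMeasurable X μ) {M : ℝ}
    (hXM : ∀ᵐ ω ∂μ, |X ω - μ[X]| ≤ M) {l : ℕ} (hl : 2 ≤ l) :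
    ∫ ω, |X ω - μ[X]| ^ l ∂μ ≤ M ^ (l - 2) * Var[X; μ] := by
  rw [variance_eq_integral hX]
  exact integral_abs_pow_le_pow_mul_integral_sq (hX.sub_const _).aestronglyMeasurable hXM hl

theorem conditionB_of_bounded_general
    {Ω : Type*} [MeasurableSpace Ω] (P : Measure Ω) [IsProbabilityMeasure P]
    (Z₁ : Ω → ℕ) (hmeas : Measurable Z₁)
    (m : ℝ) (hm : m = ∫ ω, (Z₁ ω : ℝ) ∂P)
    (c₂ : ℝ) (hbdd : ∀ᵐ ω ∂P, (Z₁ ω : ℝ) ≤ m + c₂) :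
    ∀ l : ℕ, 2 ≤ l →
      ∫ ω, |(Z₁ ω : ℝ) - m| ^ l ∂P ≤
        (1 / 2) * (Nat.factorial l) * ((l : ℝ) - 1) ^ (-(l : ℝ) / 2) *
          ((2 : ℝ) ^ ((3 : ℝ) / 2) / 3 * max m c₂) ^ (l - 2) *
          variance (fun ω => (Z₁ ω : ℝ)) P := by
  intro l hl
  have hm0 : 0 ≤ m := hm ▸ integral_nonneg fun ω => Nat.cast_nonneg _
  have hdev : ∀ᵐ ω ∂P, |(Z₁ ω : ℝ) - m| ≤ max m c₂ := by
    filter_upwards [hbdd] with ω h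
    have : (0 : ℝ) ≤ Z₁ ω := Nat.cast_nonneg _
    exact abs_sub_le_iff.2 ⟨by linarith [le_max_right m c₂], by linarith [le_max_left m c₂]⟩
  have hX : Measurable fun ω => (Z₁ ω : ℝ) := measurable_from_nat.comp hmeas
  have hcentral :=
    integral_abs_sub_integral_pow_le_pow_mul_variance hX.aemeasurable (by rwa [← hm]) hl
  rw [← hm] at hcentral
  have hnonneg : 0 ≤ max m c₂ ^ (l - 2) * variance (fun ω => (Z₁ ω : ℝ)) P :=
    mul_nonneg (pow_nonneg (hm0.trans (le_max_left m c₂)) _) (variance_nonneg _ _)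
  calc _ ≤ 1 * (max m c₂ ^ (l - 2) * variance (fun ω => (Z₁ ω : ℝ)) P) := by rwa [one_mul]
    _ ≤ _ := mul_le_mul_of_nonneg_right (one_le_half_mul_factorial_mul_rpow_mul_pow hl) hnonneg
    _ = _ := by rw [mul_pow]; ring

/-- Remark 2.1, item 1: a bounded offspring law satisfies Condition (B) with
`c = (2^{3/2}/3) max{m, c₂}`. -/
theorem conditionB_of_bounded
    {Ω : Type*} [MeasurableSpace Ω] (P : Measure Ω) [IsProbabilityMeasure P]
    (Z₁ : Ω → ℕ) (hmeas : Measurable Z₁)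
    (hp0 : P {ω | Z₁ ω = 0} = 0)
    (m : ℝ) (hm : m = ∫ ω, (Z₁ ω : ℝ) ∂P) (hm1 : 1 < m)
    (hL2 : MemLp (fun ω => (Z₁ ω : ℝ)) 2 P)
    (hvar : 0 < variance (fun ω => (Z₁ ω : ℝ)) P)
    (c₂ : ℝ) (hc₂ : 0 < c₂) (hbdd : ∀ᵐ ω ∂P, (Z₁ ω : ℝ) ≤ m + c₂) :
    ∀ l : ℕ, 2 ≤ l →
      ∫ ω, |(Z₁ ω : ℝ) - m| ^ l ∂P ≤
        (1 / 2) * (Nat.factorial l) * ((l : ℝ) - 1) ^ (-(l : ℝ) / 2) *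
          ((2 : ℝ) ^ ((3 : ℝ) / 2) / 3 * max m c₂) ^ (l - 2) *
          variance (fun ω => (Z₁ ω : ℝ)) P :=
  conditionB_of_bounded_general P Z₁ hmeas m hm c₂ hbdd
end

section
/- For every integer l ≥ 2, the double factorial satisfies (l−1)!! ≤ √(l!) and √(l!) ≤ l! (l−1)^{−l/2} 2^{l−2}; in particular (l−1)!! ≤ l! (l−1)^{−l/2} 2^{l−2}. -/
/-!
Since `n‼ ≤ (n + 1)‼`, we get `n‼ ^ 2 ≤ n‼ * (n + 1)‼ = (n + 1)!`, the lower bound.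
After squaring, the upper bound becomes `(l - 1) ^ l ≤ l! * 4 ^ (l - 2)`, which follows by
induction from `(1 + 1/n) ^ n ≤ e < 4`.
-/

open Nat

theorem Nat.doubleFactorial_le_doubleFactorial_succ : ∀ n : ℕ, n‼ ≤ (n + 1)‼
  | 0 => le_rfl
  | 1 => by decide
  | n + 2 => by
    rw [doubleFactorial_add_two, doubleFactorial_add_two]
    exact Nat.mul_le_mul (by omega) (doubleFactorial_le_doubleFactorial_succ n)

theorem Nat.doubleFactorial_sq_le_factorial_succ (n : ℕ) : n‼ ^ 2 ≤ (n + 1)! := by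
  rw [factorial_eq_mul_doubleFactorial, sq]
  exact Nat.mul_le_mul_right _ (doubleFactorial_le_doubleFactorial_succ n)

theorem succ_pow_le_four_mul_pow (n : ℕ) : ((n : ℝ) + 1) ^ n ≤ 4 * (n : ℝ) ^ n := by
  rcases n.eq_zero_or_pos with rfl | hn
  · norm_num
  have hn' : (0 : ℝ) < n := by exact_mod_cast hn
  calc ((n : ℝ) + 1) ^ n = (1 + (n : ℝ)⁻¹) ^ n * (n : ℝ) ^ n := by
        rw [← mul_pow]; congr 1; field_simp
    _ ≤ Real.exp 1 * (n : ℝ) ^ n := by gcongr; exact Real.one_add_inv_pow_le_exp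
    _ ≤ 4 * (n : ℝ) ^ n := by gcongr; linarith [Real.exp_one_lt_d9]

theorem succ_pow_self_le_factorial_mul_four_pow (m : ℕ) :
    ((m : ℝ) + 1) ^ (m + 1) ≤ (m + 1)! * 4 ^ m := by
  induction m with
  | zero => norm_num
  | succ m ih =>
    push_cast
    have step := succ_pow_le_four_mul_pow (m + 1)
    push_cast at step
    calc ((m : ℝ) + 1 + 1) ^ (m + 1 + 1) = ((m : ℝ) + 2) * ((m : ℝ) + 1 + 1) ^ (m + 1) := by ring
      _ ≤ ((m : ℝ) + 2) * (4 * ((m : ℝ) + 1) ^ (m + 1)) := by gcongr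
      _ ≤ ((m : ℝ) + 2) * (4 * ((m + 1)! * 4 ^ m)) := by gcongr
      _ = (m + 1 + 1)! * 4 ^ (m + 1) := by push_cast [factorial_succ]; ring

theorem succ_pow_le_factorial_mul_four_pow (m : ℕ) :
    ((m : ℝ) + 1) ^ (m + 2) ≤ (m + 2)! * 4 ^ m :=
  calc ((m : ℝ) + 1) ^ (m + 2) = ((m : ℝ) + 1) * ((m : ℝ) + 1) ^ (m + 1) := by ring
    _ ≤ ((m : ℝ) + 2) * ((m + 1)! * 4 ^ m) := by
        gcongr
        · linarith
        · exact succ_pow_self_le_factorial_mul_four_pow m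
    _ = (m + 2)! * 4 ^ m := by push_cast [factorial_succ]; ring

theorem Real.sqrt_le_mul_rpow_neg_half_mul {a b c : ℝ} (n : ℕ) (ha : 0 ≤ a) (hb : 0 ≤ b)
    (hc : 0 < c) (h : c ^ n ≤ a * b ^ 2) : √a ≤ a * c ^ (-(n : ℝ) / 2) * b := by
  set s := c ^ (-(n : ℝ) / 2)
  have hs : s ^ 2 * c ^ n = 1 := by
    rw [← Real.rpow_natCast, ← Real.rpow_mul hc.le, ← Real.rpow_natCast c n,
      ← Real.rpow_add hc]
    norm_num
  rw [Real.sqrt_le_left (by positivity)]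
  calc a = a * (s ^ 2 * c ^ n) := by rw [hs, mul_one]
    _ ≤ a * (s ^ 2 * (a * b ^ 2)) := by gcongr
    _ = (a * s * b) ^ 2 := by ring

/-- Double factorial bounds: `(l−1)!! ≤ √(l!)` and `√(l!) ≤ l! (l−1)^{−l/2} 2^{l−2}`;
in particular `(l−1)!! ≤ l! (l−1)^{−l/2} 2^{l−2}`. -/
theorem doubleFactorial_le_bounds :
    ∀ l : ℕ, 2 ≤ l →
      ((Nat.doubleFactorial (l - 1) : ℝ) ≤ Real.sqrt (Nat.factorial l)) ∧
      (Real.sqrt (Nat.factorial l) ≤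
        (Nat.factorial l : ℝ) * ((l : ℝ) - 1) ^ (-(l : ℝ) / 2) * 2 ^ (l - 2)) ∧
      ((Nat.doubleFactorial (l - 1) : ℝ) ≤
        (Nat.factorial l : ℝ) * ((l : ℝ) - 1) ^ (-(l : ℝ) / 2) * 2 ^ (l - 2)) := by
  intro l hl
  obtain ⟨m, rfl⟩ : ∃ m, l = m + 2 := ⟨l - 2, by omega⟩
  have hsub : ((m + 2 : ℕ) : ℝ) - 1 = m + 1 := by push_cast; ring
  have lower : ((m + 2 - 1)‼ : ℝ) ≤ √((m + 2)! : ℝ) := by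
    rw [Real.le_sqrt (by positivity) (by positivity)]
    exact_mod_cast doubleFactorial_sq_le_factorial_succ (m + 1)
  have upper : √((m + 2)! : ℝ) ≤
      (m + 2)! * (((m + 2 : ℕ) : ℝ) - 1) ^ (-((m + 2 : ℕ) : ℝ) / 2) * 2 ^ (m + 2 - 2) := by
    rw [hsub, Nat.add_sub_cancel]
    refine Real.sqrt_le_mul_rpow_neg_half_mul (m + 2) (by positivity) (by positivity)
      (by positivity) ?_
    rw [← pow_mul, mul_comm m 2, pow_mul]
    exact_mod_cast succ_pow_le_factorial_mul_four_pow m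
  exact ⟨lower, upper, lower.trans upper⟩
end
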